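/- Let T, σ > 0, μ > ρ, and B(T) ~ N(0,T). With f* = 1_{x > (T/σ)(ρ − μ + σ²/2)}, one has E[(1 − f*(B(T)))·exp(ρT) + f*(B(T))·exp((μ − σ²/2)T + σB(T))] = Φ((σ² + 2ρ − 2μ)√T/(2σ))·exp(ρT) + Φ((σ² − 2ρ + 2μ)√T/(2σ))·exp(μT). -/

import Mathlib

/-!
On `{B ≤ c}` the wealth is the constant `exp (ρ T)`, contributing `exp (ρ T) Φ (c / √T)`.
On `{B > c}` exponential tilting, `exp (σ x) 𝒩(0, T)(dx) = exp (σ² T / 2) 𝒩(σ T, T)(dx)`,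
turns the contribution into `exp (μ T) ℙ(𝒩(σ T, T) > c) = exp (μ T) Φ ((σ T - c) / √T)`.
With `c = (T / σ)(ρ - μ + σ² / 2)` both arguments of `Φ` simplify to the stated ones.
-/

open MeasureTheory ProbabilityTheory

noncomputable def stdNormalCDF (z : ℝ) : ℝ :=
  ∫ s in Set.Iic z, (Real.sqrt (2 * Real.pi))⁻¹ * Real.exp (-s ^ 2 / 2)

open Set Real NNReal

lemma setIntegral_gaussianPDFReal {m : ℝ} {v : ℝ≥0} (hv : v ≠ 0) (s : Set ℝ) :
    ∫ x in s, gaussianPDFReal m v x = (gaussianReal m v).real s := by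
  rw [measureReal_def, gaussianReal_apply_eq_integral m hv, ENNReal.toReal_ofReal
    (setIntegral_nonneg_of_ae (ae_of_all _ fun x ↦ gaussianPDFReal_nonneg m v x))]

lemma stdNormalCDF_eq_measureReal_gaussianReal_Iic (z : ℝ) :
    stdNormalCDF z = (gaussianReal 0 1).real (Iic z) := by
  rw [← setIntegral_gaussianPDFReal one_ne_zero, stdNormalCDF]
  simp [gaussianPDFReal]

lemma measureReal_gaussianReal_Iic {m : ℝ} {v : ℝ≥0} (hv : v ≠ 0) (c : ℝ) :
    (gaussianReal m v).real (Iic c) = stdNormalCDF ((c - m) / √v) := by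
  have hsqrt : 0 < √(v : ℝ) := Real.sqrt_pos.2 (NNReal.coe_pos.2 (pos_iff_ne_zero.2 hv))
  have hstd : (gaussianReal m v).map (fun x ↦ (x - m) / √v) = gaussianReal 0 1 := by
    have : (fun x ↦ (x - m) / √v) = (· / √(v : ℝ)) ∘ (· - m) := rfl
    rw [this, ← Measure.map_map (by fun_prop) (by fun_prop), gaussianReal_map_sub_const,
      gaussianReal_map_div_const, sub_self, zero_div]
    congr
    ext
    simp [hv]
  rw [stdNormalCDF_eq_measureReal_gaussianReal_Iic, ← hstd,
    map_measureReal_apply (by fun_prop) measurableSet_Iic]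
  congr 2
  ext x
  simp [div_le_div_iff_of_pos_right hsqrt]

lemma measureReal_gaussianReal_Ioi {m : ℝ} {v : ℝ≥0} (hv : v ≠ 0) (c : ℝ) :
    (gaussianReal m v).real (Ioi c) = stdNormalCDF ((m - c) / √v) := by
  have := nullSingletonClass_gaussianReal (μ := -m) hv
  have hneg : gaussianReal m v = (gaussianReal (-m) v).map (fun x ↦ -x) := by
    rw [gaussianReal_map_neg, neg_neg]
  have hpre : (fun x : ℝ ↦ -x) ⁻¹' Ioi c = Iio (-c) := by
    ext x
    simp
  rw [hneg, map_measureReal_apply (by fun_prop) measurableSet_Ioi, hpre,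
    measureReal_congr Iio_ae_eq_Iic, measureReal_gaussianReal_Iic hv]
  ring_nf

lemma gaussianPDFReal_mul_exp (m : ℝ) (v : ℝ≥0) (a x : ℝ) :
    gaussianPDFReal m v x * exp (a * x)
      = exp (a * m + v * a ^ 2 / 2) * gaussianPDFReal (m + v * a) v x := by
  rcases eq_or_ne v 0 with rfl | hv
  · simp [gaussianPDFReal_zero_var]
  have hv' : (v : ℝ) ≠ 0 := by exact_mod_cast hv
  simp only [gaussianPDFReal]
  rw [mul_assoc, ← exp_add, mul_left_comm, ← exp_add]
  congr 2
  field_simp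
  ring

lemma setIntegral_exp_mul_gaussianReal {m : ℝ} {v : ℝ≥0} (hv : v ≠ 0) {s : Set ℝ}
    (hs : MeasurableSet s) (a : ℝ) :
    ∫ x in s, exp (a * x) ∂gaussianReal m v
      = exp (a * m + v * a ^ 2 / 2) * (gaussianReal (m + v * a) v).real s := by
  rw [← integral_indicator hs, integral_gaussianReal_eq_integral_smul hv,
    ← setIntegral_gaussianPDFReal hv, ← integral_const_mul, ← integral_indicator hs]
  congr 1
  ext x
  by_cases hx : x ∈ s <;> simp [hx, gaussianPDFReal_mul_exp]

lemma integral_threshold_const_exp_gaussianReal {m : ℝ} {v : ℝ≥0} (hv : v ≠ 0)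
    (c a b s : ℝ) :
    ∫ x, ((1 - (if c < x then (1 : ℝ) else 0)) * a +
        (if c < x then (1 : ℝ) else 0) * exp (b + s * x)) ∂gaussianReal m v
      = a * stdNormalCDF ((c - m) / √v) +
        exp (b + s * m + v * s ^ 2 / 2) * stdNormalCDF ((m + v * s - c) / √v) := by
  have hsplit : (fun x ↦ (1 - (if c < x then (1 : ℝ) else 0)) * a +
        (if c < x then (1 : ℝ) else 0) * exp (b + s * x))
      = fun x ↦ (Iic c).indicator (fun _ ↦ a) x +
          exp b * (Ioi c).indicator (fun x ↦ exp (s * x)) x := by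
    ext x
    by_cases h : c < x
    · simp [h, exp_add]
    · simp [h, not_lt.mp h]
  rw [hsplit, integral_add, integral_const_mul, integral_indicator measurableSet_Iic,
    integral_indicator measurableSet_Ioi, setIntegral_const,
    setIntegral_exp_mul_gaussianReal hv measurableSet_Ioi, measureReal_gaussianReal_Iic hv,
    measureReal_gaussianReal_Ioi hv]
  · simp only [smul_eq_mul, exp_add]
    ring
  · exact (integrable_const a).indicator measurableSet_Iic
  · exact ((integrable_exp_mul_gaussianReal s).indicator measurableSet_Ioi).const_mul _

theorem stmt_10_general (T σ ρ μ : ℝ) (hT : 0 < T) (hσ : 0 < σ) :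
    (∫ x, ((1 - (if (T / σ) * (ρ - μ + σ ^ 2 / 2) < x then (1 : ℝ) else 0)) * Real.exp (ρ * T) +
        (if (T / σ) * (ρ - μ + σ ^ 2 / 2) < x then (1 : ℝ) else 0) *
          Real.exp ((μ - σ ^ 2 / 2) * T + σ * x)) ∂(gaussianReal 0 ⟨T, hT.le⟩)) =
      stdNormalCDF ((σ ^ 2 + 2 * ρ - 2 * μ) * Real.sqrt T / (2 * σ)) * Real.exp (ρ * T) +
      stdNormalCDF ((σ ^ 2 - 2 * ρ + 2 * μ) * Real.sqrt T / (2 * σ)) * Real.exp (μ * T) := by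
  have hvar : (⟨T, hT.le⟩ : ℝ≥0) ≠ 0 := ne_of_gt hT
  have hsqrt0 : √T ≠ 0 := (sqrt_pos.2 hT).ne'
  have hlow : T / σ * (ρ - μ + σ ^ 2 / 2) / √T
      = (σ ^ 2 + 2 * ρ - 2 * μ) * √T / (2 * σ) := by
    field_simp
    rw [sq_sqrt hT.le]
    ring
  have hhigh : (T * σ - T / σ * (ρ - μ + σ ^ 2 / 2)) / √T
      = (σ ^ 2 - 2 * ρ + 2 * μ) * √T / (2 * σ) := by
    field_simp
    rw [sq_sqrt hT.le]
    ring
  have hexp : (μ - σ ^ 2 / 2) * T + T * σ ^ 2 / 2 = μ * T := by ring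
  have key := integral_threshold_const_exp_gaussianReal (m := 0) hvar
    (T / σ * (ρ - μ + σ ^ 2 / 2)) (exp (ρ * T)) ((μ - σ ^ 2 / 2) * T) σ
  -- `⟨T, _⟩` is elaborated as a bare `Subtype.mk`, which `NNReal.coe_mk` does not match.
  dsimp only [NNReal.toReal] at key
  simp only [sub_zero, zero_add, mul_zero, add_zero, hlow, hhigh, hexp] at key
  rw [key]
  ring

theorem stmt_10 (T σ ρ μ : ℝ) (hT : 0 < T) (hσ : 0 < σ) (hρμ : ρ < μ) :
    (∫ x, ((1 - (if (T / σ) * (ρ - μ + σ ^ 2 / 2) < x then (1 : ℝ) else 0)) * Real.exp (ρ * T) +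
        (if (T / σ) * (ρ - μ + σ ^ 2 / 2) < x then (1 : ℝ) else 0) *
          Real.exp ((μ - σ ^ 2 / 2) * T + σ * x)) ∂(gaussianReal 0 ⟨T, hT.le⟩)) =
      stdNormalCDF ((σ ^ 2 + 2 * ρ - 2 * μ) * Real.sqrt T / (2 * σ)) * Real.exp (ρ * T) +
      stdNormalCDF ((σ ^ 2 - 2 * ρ + 2 * μ) * Real.sqrt T / (2 * σ)) * Real.exp (μ * T) :=
  stmt_10_general T σ ρ μ hT hσ
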